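/- arXiv:2310.04870 — 4 statements merged into one kernel-verified Lean document; each statement's English description precedes it below -/
import Mathlib

section
/- If a property q is an invariant on program P, and q implies p with respect to P (i.e., p is an invariant on the program obtained from P by assuming q), then p is an invariant on P. -/
open scoped Classical

/-- An execution is a finite list of (state, line) pairs. -/
abbrev Execution (σ : Type*) := List (σ × ℕ)

/-- A program is a set of executions. -/
abbrev Program (σ : Type*) := Set (Execution σ)

/-- A property is a predicate on states together with a line number. -/
abbrev Property (σ : Type*) := (σ → Prop) × ℕ

/-- A property holds on an execution if its predicate is true at every
occurrence of its line. -/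
def holdsOn {σ : Type*} (p : Property σ) (e : Execution σ) : Prop :=
  ∀ pr ∈ e, pr.2 = p.2 → p.1 pr.1

/-- `p` is an invariant on `P` if it holds on every execution of `P`. -/
def isInvariant {σ : Type*} (P : Program σ) (p : Property σ) : Prop :=
  ∀ e ∈ P, holdsOn p e

/-- Truncate an execution at the first occurrence of `q`'s line where `q`'s
predicate fails. -/
noncomputable def truncAt {σ : Type*} (q : Property σ) : Execution σ → Execution σ
  | [] => []
  | a :: l => if a.2 = q.2 ∧ ¬ q.1 a.1 then [] else a :: truncAt q l

/-- The program `asm P q`: each execution of `P` truncated at the first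
failure of the assumption `q`. -/
noncomputable def asmP {σ : Type*} (P : Program σ) (q : Property σ) : Program σ :=
  (truncAt q) '' P

/-- `q` implies `p` with respect to `P`: `p` is an invariant on `asm(P, q)`. -/
noncomputable def impliesWrt {σ : Type*} (P : Program σ) (q p : Property σ) : Prop :=
  isInvariant (asmP P q) p

/-- `q` is stable for `P`: on each execution, `q`'s predicate is either true at
all occurrences of `q`'s line or false at all of them. -/
def isStable {σ : Type*} (P : Program σ) (q : Property σ) : Prop :=
  ∀ e ∈ P, (∀ pr ∈ e, pr.2 = q.2 → q.1 pr.1) ∨ (∀ pr ∈ e, pr.2 = q.2 → ¬ q.1 pr.1)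

/-- The negation of a property. -/
def pneg {σ : Type*} (q : Property σ) : Property σ := (fun s => ¬ q.1 s, q.2)

theorem truncAt_eq_self_of_holdsOn {σ : Type*} {q : Property σ} :
    ∀ {e : Execution σ}, holdsOn q e → truncAt q e = e
  | [], _ => rfl
  | a :: l, h => by
    have ha : ¬ (a.2 = q.2 ∧ ¬ q.1 a.1) := fun ⟨hline, hfail⟩ =>
      hfail (h a List.mem_cons_self hline)
    rw [truncAt, if_neg ha,
      truncAt_eq_self_of_holdsOn fun pr hpr => h pr (List.mem_cons_of_mem a hpr)]

theorem asmP_eq_self_of_isInvariant {σ : Type*} {P : Program σ} {q : Property σ}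
    (hq : isInvariant P q) : asmP P q = P :=
  Set.EqOn.image_eq_self fun e he => truncAt_eq_self_of_holdsOn (hq e he)

/-- If `q` is an invariant on `P` and `q` implies `p` with respect to `P`
(i.e. `p` is an invariant on `asm(P, q)`), then `p` is an invariant on `P`. -/
theorem stmt_0 {σ : Type*} (P : Program σ) (p q : Property σ)
    (hq : isInvariant P q) (himp : impliesWrt P q p) :
    isInvariant P p := by
  rwa [impliesWrt, asmP_eq_self_of_isInvariant hq] at himp
end

section
/- Implication with respect to a program is transitive: if p implies q with respect to P and q implies r with respect to P, then p implies r with respect to P. -/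
open scoped Classical

/-! `truncAt q e` is the longest prefix of `e` on which `q` holds. If `q` holds on `truncAt p e`,
then `truncAt p e` is therefore a prefix of `truncAt q e`, and `r`, holding on the latter, holds
on the former. -/

lemma truncAt_prefix {σ : Type*} (q : Property σ) (e : Execution σ) : truncAt q e <+: e := by
  induction e with
  | nil => exact List.nil_prefix
  | cons a l ih =>
    unfold truncAt
    split_ifs
    · exact List.nil_prefix
    · exact List.cons_prefix_cons.mpr ⟨rfl, ih⟩

lemma prefix_truncAt_of_holdsOn {σ : Type*} {q : Property σ} {l e : Execution σ}
    (hle : l <+: e) (hq : holdsOn q l) : l <+: truncAt q e := by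
  induction l generalizing e with
  | nil => exact List.nil_prefix
  | cons a l ih =>
    obtain ⟨t, rfl⟩ := hle
    have ha : ¬ (a.2 = q.2 ∧ ¬ q.1 a.1) := fun ⟨hline, hfail⟩ => hfail (hq a (by simp) hline)
    rw [List.cons_append, truncAt, if_neg ha]
    exact List.cons_prefix_cons.mpr
      ⟨rfl, ih (List.prefix_append l t) fun pr hpr => hq pr (List.mem_cons_of_mem a hpr)⟩

lemma holdsOn_of_subset {σ : Type*} {q : Property σ} {l e : Execution σ}
    (hle : l ⊆ e) (hq : holdsOn q e) : holdsOn q l :=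
  fun pr hpr => hq pr (hle hpr)

/-- Implication with respect to a program is transitive. -/
theorem stmt_3 {σ : Type*} (P : Program σ) (p q r : Property σ)
    (hpq : impliesWrt P p q) (hqr : impliesWrt P q r) :
    impliesWrt P p r := by
  rintro _ ⟨e, he, rfl⟩
  have hq : holdsOn q (truncAt p e) := hpq _ ⟨e, he, rfl⟩
  have hr : holdsOn r (truncAt q e) := hqr _ ⟨e, he, rfl⟩
  exact holdsOn_of_subset (prefix_truncAt_of_holdsOn (truncAt_prefix p e) hq).subset hr
end

section
/- Let q be a stable property for program P, meaning that on each execution of P, the predicate of q either evaluates true at every occurrence of q's line or evaluates false at every occurrence. If q implies p with respect to P and ¬q implies p with respect to P, then p is an invariant on P. -/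
open scoped Classical

theorem holdsOn_of_impliesWrt {σ : Type*} {P : Program σ} {q p : Property σ}
    (h : impliesWrt P q p) {e : Execution σ} (he : e ∈ P) (hq : holdsOn q e) :
    holdsOn p e :=
  truncAt_eq_self_of_holdsOn hq ▸ h (truncAt q e) ⟨e, he, rfl⟩

/-- If `q` is stable for `P`, `q` implies `p` w.r.t. `P`, and `¬q` implies `p`
w.r.t. `P`, then `p` is an invariant on `P`. -/
theorem stmt_4 {σ : Type*} (P : Program σ) (p q : Property σ)
    (hs : isStable P q) (h1 : impliesWrt P q p) (h2 : impliesWrt P (pneg q) p) :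
    isInvariant P p := by
  intro e he
  rcases hs e he with hq | hnq
  · exact holdsOn_of_impliesWrt h1 he hq
  · exact holdsOn_of_impliesWrt h2 he hnq
end

section
/- In any configuration (P, A, T) reachable from (P, ∅, [p₀]) by valid Lemur rule applications, if the trail has the form T' ++ [p, q] (i.e., q immediately follows p), then q implies p with respect to P. -/
open scoped Classical

/-- Apply an optional assumption to a program. -/
noncomputable def asmOpt {σ : Type*} (P : Program σ) : Option (Property σ) → Program σ
  | none => P
  | some q => asmP P q

/-- A verifier takes a program, an optional assumption and a property, and
returns `some true` (proven), `some false` (falsified) or `none` (unknown). -/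
abbrev Verifier (σ : Type*) :=
  Program σ → Option (Property σ) → Property σ → Option Bool

/-- Configurations of the Lemur calculus: a triple of program, assumption set
(empty or singleton) and trail, or a terminal `success`/`fail` state. -/
inductive Conf (σ : Type*) where
  | state (P : Program σ) (A : Option (Property σ)) (T : List (Property σ))
  | success
  | fail

/-- The transition rules of the Lemur calculus, parameterized by a verifier
`V`, a proposal oracle `Ωp` and a repair oracle `Ωr`. -/
inductive LStep {σ : Type*} (V : Verifier σ)
    (Ωp : Program σ → Property σ → Set (Property σ))
    (Ωr : Program σ → Property σ → Property σ → Option Bool → Set (Property σ)) :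
    Conf σ → Conf σ → Prop where
  | propose {P A T' p q} (h1 : V P A p = none) (h2 : q ∈ Ωp P p) :
      LStep V Ωp Ωr (.state P A (T' ++ [p])) (.state P (some q) (T' ++ [p]))
  | decide {P q T' p} (h : V P (some q) p = some true) :
      LStep V Ωp Ωr (.state P (some q) (T' ++ [p])) (.state P none (T' ++ [p, q]))
  | backtrack {P A T' p q q'} (h1 : V P A q ≠ some true) (h2 : q' ∈ Ωp P p) :
      LStep V Ωp Ωr (.state P A (T' ++ [p, q])) (.state P (some q') (T' ++ [p]))
  | repair1 {P q T' p q'} (h1 : V P (some q) p = none) (h2 : q' ∈ Ωr P p q none) :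
      LStep V Ωp Ωr (.state P (some q) (T' ++ [p])) (.state P (some q') (T' ++ [p]))
  | repair2 {P T' p q q'} (h1 : V P none q = some false)
      (h2 : q' ∈ Ωr P p q (some false)) :
      LStep V Ωp Ωr (.state P none (T' ++ [p, q])) (.state P (some q') (T' ++ [p]))
  | success1 {P T' p} (h : V P none p = some true) :
      LStep V Ωp Ωr (.state P none (T' ++ [p])) .success
  | success2 {P T' p q} (hs : isStable P q) (h : V P (some (pneg q)) p = some true) :
      LStep V Ωp Ωr (.state P none (T' ++ [p, q])) .success
  | fail {P A p} (h : V P A p = some false) :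
      LStep V Ωp Ωr (.state P A [p]) .fail

/-- A configuration is reachable from another by a sequence of valid rule
applications. -/
def Reaches {σ : Type*} (V : Verifier σ)
    (Ωp : Program σ → Property σ → Set (Property σ))
    (Ωr : Program σ → Property σ → Property σ → Option Bool → Set (Property σ)) :
    Conf σ → Conf σ → Prop :=
  Relation.ReflTransGen (LStep V Ωp Ωr)

def Conf.TrailChained {σ : Type*} : Conf σ → Prop
  | .state P _ T => T.IsChain fun p q => impliesWrt P q p
  | _ => True

section

variable {σ : Type*} {V : Verifier σ} {Ωp : Program σ → Property σ → Set (Property σ)}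
  {Ωr : Program σ → Property σ → Property σ → Option Bool → Set (Property σ)}

/-- Decide is the only rule that extends the trail, and its verifier call certifies exactly the
new link; the other rules keep the trail or drop its last element. -/
theorem LStep.trailChained
    (hV : ∀ (P : Program σ) (A : Option (Property σ)) (p : Property σ),
      V P A p = some true → isInvariant (asmOpt P A) p)
    {c c' : Conf σ} (hs : LStep V Ωp Ωr c c') (hc : c.TrailChained) : c'.TrailChained := by
  cases hs with
  | propose | repair1 => exact hc
  | decide h => exact List.isChain_append_cons_cons.mpr ⟨hc, hV _ _ _ h, .singleton _⟩
  | backtrack | repair2 => exact (List.isChain_append_cons_cons.mp hc).1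
  | success1 | success2 | fail => trivial

theorem Reaches.trailChained
    (hV : ∀ (P : Program σ) (A : Option (Property σ)) (p : Property σ),
      V P A p = some true → isInvariant (asmOpt P A) p)
    {c c' : Conf σ} (h : Reaches V Ωp Ωr c c') (hc : c.TrailChained) : c'.TrailChained := by
  induction h with
  | refl => exact hc
  | tail _ hs ih => exact hs.trailChained hV ih

end

/-- In any configuration `(P, A, T)` reachable by valid Lemur rule
applications from `(P, ∅, [p₀])`, assuming the verifier is sound for positive
answers, if the trail has the form `T' ++ [p, q]`, then `q` implies `p` with
respect to `P`. -/
theorem stmt_9 {σ : Type*} (V : Verifier σ)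
    (Ωp : Program σ → Property σ → Set (Property σ))
    (Ωr : Program σ → Property σ → Property σ → Option Bool → Set (Property σ))
    (hV : ∀ (P : Program σ) (A : Option (Property σ)) (p : Property σ),
      V P A p = some true → isInvariant (asmOpt P A) p)
    (P : Program σ) (p₀ : Property σ)
    (A : Option (Property σ)) (T' : List (Property σ)) (p q : Property σ)
    (h : Reaches V Ωp Ωr (.state P none [p₀]) (.state P A (T' ++ [p, q]))) :
    impliesWrt P q p := by
  have hT : Conf.TrailChained (.state P A (T' ++ [p, q])) :=
    h.trailChained hV (List.isChain_singleton p₀)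
  exact (List.isChain_append_cons_cons.mp hT).2.1
end
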